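/- For the state α_{V,d} = (1/2)(|0⟩⟨0| ⊗ I/d² + |0⟩⟨1| ⊗ V/d² + |1⟩⟨0| ⊗ V/d² + |1⟩⟨1| ⊗ I/d²) on ℂ² ⊗ (ℂ^d ⊗ ℂ^d), the trace-norm distance of its partial transpose (on the last factor) from the maximally mixed state satisfies ‖(α_{V,d})^Γ − I/(2d²)‖₁ ≤ 2/d. -/

import Mathlib

open Matrix BigOperators Filter

noncomputable section

def swapM (d : ℕ) : Matrix (Fin d × Fin d) (Fin d × Fin d) ℂ :=
  fun p q => if p.1 = q.2 ∧ p.2 = q.1 then 1 else 0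

def phiProj (d : ℕ) : Matrix (Fin d × Fin d) (Fin d × Fin d) ℂ :=
  fun p q => if p.1 = p.2 ∧ q.1 = q.2 then (d : ℂ)⁻¹ else 0

def ptB {d : ℕ} (ρ : Matrix (Fin d × Fin d) (Fin d × Fin d) ℂ) :
    Matrix (Fin d × Fin d) (Fin d × Fin d) ℂ :=
  fun p q => ρ (p.1, q.2) (q.1, p.2)

def rhoS (d : ℕ) : Matrix (Fin d × Fin d) (Fin d × Fin d) ℂ :=
  ((d : ℂ)^2 + (d : ℂ))⁻¹ • (1 + swapM d)

def rhoA (d : ℕ) : Matrix (Fin d × Fin d) (Fin d × Fin d) ℂ :=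
  ((d : ℂ)^2 - (d : ℂ))⁻¹ • (1 - swapM d)

def wernerT (d : ℕ) (θ : ℝ) : Matrix (Fin d × Fin d) (Fin d × Fin d) ℂ :=
  ((1 - θ : ℝ) : ℂ) • rhoS d + ((θ : ℝ) : ℂ) • rhoA d

def wernerA (d : ℕ) (α : ℝ) : Matrix (Fin d × Fin d) (Fin d × Fin d) ℂ :=
  (((1 + α) / 2 : ℝ) : ℂ) • rhoS d + (((1 - α) / 2 : ℝ) : ℂ) • rhoA d

def trB {dA dB : ℕ} (ρ : Matrix (Fin dA × Fin dB) (Fin dA × Fin dB) ℂ) :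
    Matrix (Fin dA) (Fin dA) ℂ :=
  fun i k => ∑ j, ρ (i, j) (k, j)

def trA {dA dB : ℕ} (ρ : Matrix (Fin dA × Fin dB) (Fin dA × Fin dB) ℂ) :
    Matrix (Fin dB) (Fin dB) ℂ :=
  fun j l => ∑ i, ρ (i, j) (i, l)

def nlog2 (x : ℝ) : ℝ := -(x * Real.logb 2 x)

def binEnt (p : ℝ) : ℝ := nlog2 p + nlog2 (1 - p)

def vN {n : Type*} [Fintype n] [DecidableEq n] (ρ : Matrix n n ℂ) : ℝ :=
  if h : ρ.IsHermitian then ∑ i, nlog2 (h.eigenvalues i) else 0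

def mutInfo {dA dB : ℕ} (ρ : Matrix (Fin dA × Fin dB) (Fin dA × Fin dB) ℂ) : ℝ :=
  vN (trB ρ) + vN (trA ρ) - vN ρ

def traceNorm {n : Type*} [Fintype n] [DecidableEq n] (X : Matrix n n ℂ) : ℝ :=
  if h : X.IsHermitian then ∑ i, |h.eigenvalues i| else 0

def mlog {n : Type*} [Fintype n] [DecidableEq n] (A : Matrix n n ℂ) : Matrix n n ℂ :=
  if h : A.IsHermitian then
    (h.eigenvectorUnitary : Matrix n n ℂ) *
      Matrix.diagonal (fun i => ((Real.logb 2 (h.eigenvalues i) : ℝ) : ℂ)) *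
      (star (h.eigenvectorUnitary : Matrix n n ℂ))
  else 0

def qRelEnt {n : Type*} [Fintype n] [DecidableEq n] (ρ σ : Matrix n n ℂ) : ℝ :=
  ((ρ * mlog ρ - ρ * mlog σ).trace).re

def tpow {m : Type*} [Fintype m] (ρ : Matrix m m ℂ) (n : ℕ) :
    Matrix (Fin n → m) (Fin n → m) ℂ :=
  fun f g => ∏ i, ρ (f i) (g i)

def klDiv2 {ι : Type*} [Fintype ι] (p q : ι → ℝ) : ℝ :=
  ∑ i, p i * Real.logb 2 (p i / q i)

def phiVec (d : ℕ) : Fin d × Fin d → ℂ :=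
  fun p => if p.1 = p.2 then (Complex.ofReal (Real.sqrt d))⁻¹ else 0

def alphaV (d : ℕ) : Matrix (Fin 2 × (Fin d × Fin d)) (Fin 2 × (Fin d × Fin d)) ℂ :=
  fun p q => (2 * (d : ℂ)^2)⁻¹ *
    (if p.1 = q.1 then (if p.2 = q.2 then 1 else 0)
     else (if p.2.1 = q.2.2 ∧ p.2.2 = q.2.1 then 1 else 0))

def ptLast {d : ℕ} (ρ : Matrix (Fin 2 × (Fin d × Fin d)) (Fin 2 × (Fin d × Fin d)) ℂ) :
    Matrix (Fin 2 × (Fin d × Fin d)) (Fin 2 × (Fin d × Fin d)) ℂ :=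
  fun p q => ρ (p.1, (p.2.1, q.2.2)) (q.1, (q.2.1, p.2.2))

/-!
Partial transposition turns the swap `V` into `d |Φ⁺⟩⟨Φ⁺|`, so the deviation of
`(α_{V,d})^Γ` from the maximally mixed state is `X = (2d)⁻¹ σₓ ⊗ |Φ⁺⟩⟨Φ⁺|`. Since `σₓ² = 1`
and `|Φ⁺⟩⟨Φ⁺|` is a projection, `X³ = (2d)⁻² X`; hence every eigenvalue `λ` of `X` lies in
`{0, ±(2d)⁻¹}` and satisfies `|λ| = 2d λ²`. Summing, `‖X‖₁ = 2d tr X² = 1/d`.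
-/

open scoped Kronecker

lemma abs_eq_sq_div_of_pow_three_eq {x c : ℝ} (hc : 0 < c) (h : x ^ 3 = c ^ 2 * x) :
    |x| = x ^ 2 / c := by
  rcases eq_or_ne x 0 with rfl | hx
  · simp
  have hsq : x ^ 2 = c ^ 2 := mul_right_cancel₀ hx (by linear_combination h)
  rw [(sq_eq_sq_iff_abs_eq_abs x c).mp hsq, abs_of_pos hc, hsq]
  field_simp

namespace Matrix.IsHermitian

lemma kronecker {α m n : Type*} [CommSemiring α] [StarRing α] {A : Matrix m m α}
    {B : Matrix n n α} (hA : A.IsHermitian) (hB : B.IsHermitian) : (A ⊗ₖ B).IsHermitian := by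
  rw [IsHermitian, conjTranspose_kronecker, hA.eq, hB.eq]

variable {𝕜 n : Type*} [RCLike 𝕜] [Fintype n] [DecidableEq n] {A : Matrix n n 𝕜}

lemma trace_mul_self (hA : A.IsHermitian) :
    (A * A).trace = ∑ i, (hA.eigenvalues i : 𝕜) ^ 2 := by
  conv_lhs => rw [hA.spectral_theorem, ← map_mul, Unitary.conjStarAlgAut_apply, trace_mul_cycle,
    Unitary.coe_star_mul_self, one_mul, diagonal_mul_diagonal, trace_diagonal]
  simp [sq]

lemma eigenvalues_pow_three_eq (hA : A.IsHermitian) {c : ℝ} (h : A * A * A = c • A)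
    (i : n) : hA.eigenvalues i ^ 3 = c * hA.eigenvalues i := by
  set v := ⇑(hA.eigenvectorBasis i)
  set μ := hA.eigenvalues i
  have hv : v ≠ 0 := (WithLp.ofLp_eq_zero 2).ne.2 <| hA.eigenvectorBasis.orthonormal.ne_zero i
  have hAv : A *ᵥ v = (μ : 𝕜) • v := by
    rw [hA.mulVec_eigenvectorBasis, RCLike.real_smul_eq_coe_smul (K := 𝕜)]
  have key : ((μ ^ 3 : ℝ) : 𝕜) • v = ((c * μ : ℝ) : 𝕜) • v :=
    calc ((μ ^ 3 : ℝ) : 𝕜) • v = A *ᵥ (A *ᵥ (A *ᵥ v)) := by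
          simp only [hAv, mulVec_smul, smul_smul]; push_cast; ring_nf
      _ = ((c * μ : ℝ) : 𝕜) • v := by
          rw [mulVec_mulVec, mulVec_mulVec, h, RCLike.real_smul_eq_coe_smul (K := 𝕜),
            smul_mulVec, hAv, smul_smul]
          push_cast; rfl
  exact_mod_cast smul_left_injective 𝕜 hv key

end Matrix.IsHermitian

lemma traceNorm_eq_re_trace_mul_self_div {n : Type*} [Fintype n] [DecidableEq n]
    {A : Matrix n n ℂ} (hA : A.IsHermitian) {c : ℝ} (hc : 0 < c)
    (h : A * A * A = c ^ 2 • A) : traceNorm A = (A * A).trace.re / c := by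
  rw [traceNorm, dif_pos hA, hA.trace_mul_self, Complex.re_sum, Finset.sum_div]
  refine Finset.sum_congr rfl fun i _ ↦ ?_
  rw [abs_eq_sq_div_of_pow_three_eq hc (hA.eigenvalues_pow_three_eq h i)]
  norm_cast

def pauliX : Matrix (Fin 2) (Fin 2) ℂ := !![0, 1; 1, 0]

lemma pauliX_mul_self : pauliX * pauliX = 1 := by
  ext i j; fin_cases i <;> fin_cases j <;> simp [pauliX]

lemma pauliX_isHermitian : pauliX.IsHermitian := by
  ext i j; fin_cases i <;> fin_cases j <;> simp [pauliX]

lemma phiProj_isHermitian (d : ℕ) : (phiProj d).IsHermitian := by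
  ext p q; simp only [conjTranspose_apply, phiProj]; split_ifs <;> simp_all

lemma phiProj_mul_self {d : ℕ} (hd : d ≠ 0) : phiProj d * phiProj d = phiProj d := by
  ext p q
  by_cases hp : p.1 = p.2 <;> by_cases hq : q.1 = q.2 <;>
    simp [mul_apply, phiProj, hp, hq, Fintype.sum_prod_type]
  field_simp

lemma trace_phiProj {d : ℕ} (hd : d ≠ 0) : (phiProj d).trace = 1 := by
  simp [trace, phiProj, Fintype.sum_prod_type, hd]

lemma ptLast_alphaV_sub_eq (d : ℕ) :
    ptLast (alphaV d) - (2 * (d : ℂ) ^ 2)⁻¹ • 1 = (2 * d : ℝ)⁻¹ • (pauliX ⊗ₖ phiProj d) := by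
  ext ⟨i, a, b⟩ ⟨j, c, e⟩
  fin_cases i <;> fin_cases j <;> simp [ptLast, alphaV, pauliX, phiProj, one_apply] <;>
    split_ifs <;> simp_all <;> ring

theorem alphaV_pt_close_to_maximally_mixed (d : ℕ) (hd : 1 ≤ d) :
    traceNorm (ptLast (alphaV d) - (2 * (d : ℂ)^2)⁻¹ • 1) ≤ 2/(d : ℝ) := by
  have hd0 : d ≠ 0 := by omega
  set B := pauliX ⊗ₖ phiProj d
  have hBsq : B * B = 1 ⊗ₖ phiProj d := by
    rw [← mul_kronecker_mul, pauliX_mul_self, phiProj_mul_self hd0]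
  have hBcube : B * B * B = B := by
    rw [hBsq, ← mul_kronecker_mul, one_mul, phiProj_mul_self hd0]
  set r : ℝ := (2 * d)⁻¹
  have hr : 0 < r := by positivity
  have hX : (r • B).IsHermitian :=
    (pauliX_isHermitian.kronecker (phiProj_isHermitian d)).smul (IsSelfAdjoint.all r)
  have hcube : r • B * r • B * r • B = r ^ 2 • (r • B) := by
    simp only [Matrix.smul_mul, Matrix.mul_smul, smul_smul, hBcube]; ring_nf
  rw [ptLast_alphaV_sub_eq, traceNorm_eq_re_trace_mul_self_div hX hr hcube]
  simp only [Matrix.smul_mul, Matrix.mul_smul, smul_smul, hBsq, trace_smul, trace_kronecker,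
    trace_phiProj hd0, trace_one, Fintype.card_fin, Complex.smul_re]
  calc _ = 1 / (d : ℝ) := by simp [r]; field_simp
    _ ≤ 2 / d := by gcongr; norm_num

end
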